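/- In the setting above, with φ(x_i) = φ_i and empirical covariance Σ̂ := n^{-1} Σ_{i=1}^n φ(x_i) ⊗ φ(x_i), one has E_x (y(x) − f_KR(x))² ≤ ∥w̄∥² ∥Σ − Σ̂∥, where ∥·∥ is the operator norm. -/

import Mathlib

open MeasureTheory

/-!
Write `u = w̄ - P w̄`. Since `P` is symmetric and fixes the span of the `φᵢ`, the residual `u` is
orthogonal to every `φᵢ`, so `Σ̂ u = 0`, and it is orthogonal to `P w̄`, so `‖u‖ ≤ ‖w̄‖`. The
generalization error is the quadratic form `⟪u, Σ u⟫ = ⟪u, (Σ - Σ̂) u⟫ ≤ ‖Σ - Σ̂‖ ‖u‖²`.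
-/

section InnerProductSpace

variable {𝕜 E : Type*} [RCLike 𝕜] [NormedAddCommGroup E] [InnerProductSpace 𝕜 E]

local notation "⟪" x ", " y "⟫" => inner 𝕜 x y

theorem norm_le_norm_add_of_inner_eq_zero {x y : E} (h : ⟪x, y⟫ = 0) : ‖y‖ ≤ ‖x + y‖ := by
  rw [mul_self_le_mul_self_iff (norm_nonneg _) (norm_nonneg _),
    norm_add_sq_eq_norm_sq_add_norm_sq_of_inner_eq_zero x y h]
  exact le_add_of_nonneg_left (mul_self_nonneg _)

theorem LinearMap.IsSymmetric.inner_sub_apply_eq_zero {K : Submodule 𝕜 E} {P : E →ₗ[𝕜] E}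
    (hP : P.IsSymmetric) (hfix : ∀ v ∈ K, P v = v) {v : E} (hv : v ∈ K) (w : E) :
    ⟪v, w - P w⟫ = 0 := by
  rw [inner_sub_right, ← hP, hfix v hv, sub_self]

end InnerProductSpace

theorem ContinuousLinearMap.real_inner_apply_self_le_of_apply_eq_zero {E : Type*}
    [NormedAddCommGroup E] [InnerProductSpace ℝ E] {T T' : E →L[ℝ] E} {u : E} (hu : T' u = 0) :
    inner ℝ u (T u) ≤ ‖T - T'‖ * ‖u‖ ^ 2 :=
  calc inner ℝ u (T u) = inner ℝ u ((T - T') u) := by simp [hu]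
    _ ≤ ‖u‖ * ‖(T - T') u‖ := real_inner_le_norm _ _
    _ ≤ ‖u‖ * (‖T - T'‖ * ‖u‖) := by gcongr; exact (T - T').le_opNorm u
    _ = ‖T - T'‖ * ‖u‖ ^ 2 := by ring

theorem kernel_regression_generalization_covariance
    {H : Type*} [NormedAddCommGroup H] [InnerProductSpace ℝ H]
    {Ω : Type*} [MeasurableSpace Ω] (μ : Measure Ω)
    (n : ℕ) (φs : Fin n → H) (φ : Ω → H) (wbar : H)
    (P : H →L[ℝ] H)
    (hPmem : ∀ v, P v ∈ Submodule.span ℝ (Set.range φs))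
    (hPfix : ∀ v ∈ Submodule.span ℝ (Set.range φs), P v = v)
    (hPsa : ∀ u v : H, (inner ℝ (P u) v : ℝ) = inner ℝ u (P v))
    (Sop : H →L[ℝ] H)
    (hSop : ∀ u v : H, (inner ℝ u (Sop v) : ℝ) =
        ∫ ω, (inner ℝ (φ ω) u : ℝ) * (inner ℝ (φ ω) v : ℝ) ∂μ)
    (Shat : H →L[ℝ] H)
    (hShat : ∀ v : H, Shat v = (n : ℝ)⁻¹ • ∑ i, (inner ℝ (φs i) v : ℝ) • φs i) :
    (∫ ω, ((inner ℝ (φ ω) wbar : ℝ) - (inner ℝ (φ ω) (P wbar) : ℝ)) ^ 2 ∂μ)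
      ≤ ‖wbar‖ ^ 2 * ‖Sop - Shat‖ := by
  set u := wbar - P wbar
  have hu_perp : ∀ v ∈ Submodule.span ℝ (Set.range φs), inner ℝ v u = (0 : ℝ) :=
    fun v hv => LinearMap.IsSymmetric.inner_sub_apply_eq_zero hPsa hPfix hv wbar
  have hShat_u : Shat u = 0 := by
    simp [hShat, hu_perp _ (Submodule.subset_span (Set.mem_range_self _))]
  have hu_le : ‖u‖ ≤ ‖wbar‖ := by
    simpa [u] using norm_le_norm_add_of_inner_eq_zero (hu_perp _ (hPmem wbar))
  calc (∫ ω, ((inner ℝ (φ ω) wbar : ℝ) - (inner ℝ (φ ω) (P wbar) : ℝ)) ^ 2 ∂μ)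
      = ∫ ω, (inner ℝ (φ ω) u : ℝ) * (inner ℝ (φ ω) u : ℝ) ∂μ := by
        simp only [u, inner_sub_right, sq]
    _ = inner ℝ u (Sop u) := (hSop u u).symm
    _ ≤ ‖Sop - Shat‖ * ‖u‖ ^ 2 :=
        ContinuousLinearMap.real_inner_apply_self_le_of_apply_eq_zero hShat_u
    _ ≤ ‖wbar‖ ^ 2 * ‖Sop - Shat‖ := by
        rw [mul_comm]; gcongr
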